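/- Let b, c : Fin 2 → ℝ, and let D, E, F : Matrix (Fin 2) (Fin 2) ℝ with D and F symmetric. Suppose that for all η ∈ ℝ and all φs, φr : Fin 2 → ℝ, ⟨b, R(η).mulVec φs⟩ + ⟨c, R(η).mulVec φr⟩ + ⟨R(η).mulVec φs, D.mulVec (R(η).mulVec φs)⟩ + ⟨R(η).mulVec φs, E.mulVec (R(η).mulVec φr)⟩ + ⟨R(η).mulVec φr, F.mulVec (R(η).mulVec φr)⟩ = ⟨b, φs⟩ + ⟨c, φr⟩ + ⟨φs, D.mulVec φs⟩ + ⟨φs, E.mulVec φr⟩ + ⟨φr, F.mulVec φr⟩, where ⟨·,·⟩ is the Euclidean inner product. Then b = 0, c = 0, and each of D, E, F commutes with R(η) for every η ∈ ℝ. -/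

import Mathlib

/-!
Putting one flux equal to zero isolates the stator and the rotor energy; comparing each at `φ`
and `-φ` shows that its linear and its quadratic part are separately invariant, and subtracting
both from the full identity leaves the cross term invariant. A linear form fixed by
`R π = -1` vanishes. Invariance of the form of `M` under `R η` means `(R η)ᵀ * M * R η = M`
(for the symmetric `D` and `F` by polarization), and as `R η` is orthogonal this is
`M * R η = R η * M`.
-/

open Matrix

/-- The 2×2 rotation matrix of angle `η`. -/
noncomputable def R (η : ℝ) : Matrix (Fin 2) (Fin 2) ℝ :=
  !![Real.cos η, -Real.sin η; Real.sin η, Real.cos η]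

namespace Matrix

variable {n K : Type*} [Fintype n]

section CommRing

variable [CommRing K]

theorem ext_of_dotProduct_mulVec {M N : Matrix n n K}
    (h : ∀ x y, x ⬝ᵥ M *ᵥ y = x ⬝ᵥ N *ᵥ y) : M = N :=
  ext_iff_mulVec.2 fun y => dotProduct_eq _ _ fun x => by
    rw [dotProduct_comm, h, dotProduct_comm]

theorem mulVec_dotProduct_mulVec_mulVec (Q M : Matrix n n K) (x y : n → K) :
    Q *ᵥ x ⬝ᵥ M *ᵥ (Q *ᵥ y) = x ⬝ᵥ (Qᵀ * M * Q) *ᵥ y := by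
  rw [← mulVec_mulVec, ← mulVec_mulVec, dotProduct_mulVec x, vecMul_transpose]

theorem IsSymm.dotProduct_mulVec_comm {M : Matrix n n K} (hM : M.IsSymm) (x y : n → K) :
    y ⬝ᵥ M *ᵥ x = x ⬝ᵥ M *ᵥ y := by
  rw [dotProduct_mulVec, dotProduct_comm, ← mulVec_transpose, hM.eq]

theorem IsSymm.transpose_mul_mul {M : Matrix n n K} (hM : M.IsSymm) (Q : Matrix n n K) :
    (Qᵀ * M * Q).IsSymm := by
  rw [IsSymm, transpose_mul, transpose_mul, transpose_transpose, hM.eq, Matrix.mul_assoc]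

variable [DecidableEq n]

theorem mul_eq_mul_of_transpose_mul_mul_eq {Q M : Matrix n n K} (hQ : Q * Qᵀ = 1)
    (h : Qᵀ * M * Q = M) : M * Q = Q * M :=
  calc M * Q = Q * Qᵀ * (M * Q) := by rw [hQ, Matrix.one_mul]
    _ = Q * (Qᵀ * M * Q) := by simp only [Matrix.mul_assoc]
    _ = Q * M := by rw [h]

theorem mul_eq_mul_of_dotProduct_mulVec_invariant {Q M : Matrix n n K} (hQ : Q * Qᵀ = 1)
    (h : ∀ x y, Q *ᵥ x ⬝ᵥ M *ᵥ (Q *ᵥ y) = x ⬝ᵥ M *ᵥ y) : M * Q = Q * M :=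
  mul_eq_mul_of_transpose_mul_mul_eq hQ <| ext_of_dotProduct_mulVec fun x y => by
    rw [← mulVec_dotProduct_mulVec_mulVec, h]

end CommRing

section Field

variable [Field K] [NeZero (2 : K)]

theorem eq_zero_of_dotProduct_neg_eq {b : n → K} (h : ∀ x, b ⬝ᵥ -x = b ⬝ᵥ x) : b = 0 :=
  dotProduct_eq_zero b fun x => by
    have h2 : 2 * (b ⬝ᵥ x) = 0 := by linear_combination dotProduct_neg b x - h x
    exact (mul_eq_zero.1 h2).resolve_left two_ne_zero

theorem IsSymm.eq_of_dotProduct_mulVec_self_eq {M N : Matrix n n K} (hM : M.IsSymm)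
    (hN : N.IsSymm) (h : ∀ x, x ⬝ᵥ M *ᵥ x = x ⬝ᵥ N *ᵥ x) : M = N := by
  refine ext_of_dotProduct_mulVec fun x y => mul_left_cancel₀ (two_ne_zero (α := K)) ?_
  have hxy := h (x + y)
  simp only [mulVec_add, add_dotProduct, dotProduct_add] at hxy
  linear_combination hxy - h x - h y - hM.dotProduct_mulVec_comm x y
    + hN.dotProduct_mulVec_comm x y

theorem IsSymm.mul_eq_mul_of_dotProduct_mulVec_self_invariant [DecidableEq n]
    {Q M : Matrix n n K} (hM : M.IsSymm) (hQ : Q * Qᵀ = 1)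
    (h : ∀ x, Q *ᵥ x ⬝ᵥ M *ᵥ (Q *ᵥ x) = x ⬝ᵥ M *ᵥ x) : M * Q = Q * M :=
  mul_eq_mul_of_transpose_mul_mul_eq hQ <|
    (hM.transpose_mul_mul Q).eq_of_dotProduct_mulVec_self_eq hM fun x => by
      rw [← mulVec_dotProduct_mulVec_mulVec, h]

theorem linear_and_quadratic_invariant_of_sum_invariant {b : n → K} {Q M : Matrix n n K}
    (h : ∀ x, b ⬝ᵥ Q *ᵥ x + Q *ᵥ x ⬝ᵥ M *ᵥ (Q *ᵥ x) = b ⬝ᵥ x + x ⬝ᵥ M *ᵥ x) :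
    (∀ x, b ⬝ᵥ Q *ᵥ x = b ⬝ᵥ x) ∧ ∀ x, Q *ᵥ x ⬝ᵥ M *ᵥ (Q *ᵥ x) = x ⬝ᵥ M *ᵥ x := by
  have hneg x : -(b ⬝ᵥ Q *ᵥ x) + Q *ᵥ x ⬝ᵥ M *ᵥ (Q *ᵥ x) = -(b ⬝ᵥ x) + x ⬝ᵥ M *ᵥ x := by
    simpa only [mulVec_neg, dotProduct_neg, neg_dotProduct, neg_neg] using h (-x)
  refine ⟨fun x => mul_left_cancel₀ (two_ne_zero (α := K)) ?_,
    fun x => mul_left_cancel₀ (two_ne_zero (α := K)) ?_⟩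
  · linear_combination h x - hneg x
  · linear_combination h x + hneg x

end Field

end Matrix

theorem R_mul_transpose (η : ℝ) : R η * (R η)ᵀ = 1 := by
  ext i j
  fin_cases i <;> fin_cases j <;> simp [R, mul_apply, Fin.sum_univ_two, ← sq, mul_comm]

theorem R_pi_mulVec (x : Fin 2 → ℝ) : R Real.pi *ᵥ x = -x := by
  ext i
  fin_cases i <;> simp [R, mulVec, dotProduct, Fin.sum_univ_two]

/-- Rotation invariance of the affine-quadratic induction-motor energy: if the
energy is unchanged when both flux vectors are rotated by the same angle, then
the linear parts vanish and the quadratic-form matrices commute with all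
rotations. -/
theorem im_energy_rotation_invariance
    (b c : Fin 2 → ℝ) (D E F : Matrix (Fin 2) (Fin 2) ℝ)
    (hD : D.IsSymm) (hF : F.IsSymm)
    (hinv : ∀ (η : ℝ) (φs φr : Fin 2 → ℝ),
      b ⬝ᵥ (R η).mulVec φs + c ⬝ᵥ (R η).mulVec φr
        + (R η).mulVec φs ⬝ᵥ D.mulVec ((R η).mulVec φs)
        + (R η).mulVec φs ⬝ᵥ E.mulVec ((R η).mulVec φr)
        + (R η).mulVec φr ⬝ᵥ F.mulVec ((R η).mulVec φr)
      = b ⬝ᵥ φs + c ⬝ᵥ φr + φs ⬝ᵥ D.mulVec φs + φs ⬝ᵥ E.mulVec φr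
        + φr ⬝ᵥ F.mulVec φr) :
    b = 0 ∧ c = 0 ∧ (∀ η : ℝ, D * R η = R η * D) ∧
      (∀ η : ℝ, E * R η = R η * E) ∧ (∀ η : ℝ, F * R η = R η * F) := by
  have hs (η : ℝ) := linear_and_quadratic_invariant_of_sum_invariant fun φ => by
    simpa only [mulVec_zero, dotProduct_zero, zero_dotProduct, add_zero] using hinv η φ 0
  have hr (η : ℝ) := linear_and_quadratic_invariant_of_sum_invariant fun φ => by
    simpa only [mulVec_zero, dotProduct_zero, zero_dotProduct, zero_add, add_zero]
      using hinv η 0 φ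
  have hE η φs φr : R η *ᵥ φs ⬝ᵥ E *ᵥ (R η *ᵥ φr) = φs ⬝ᵥ E *ᵥ φr := by
    linear_combination hinv η φs φr - (hs η).1 φs - (hs η).2 φs - (hr η).1 φr - (hr η).2 φr
  refine ⟨eq_zero_of_dotProduct_neg_eq fun φ => ?_, eq_zero_of_dotProduct_neg_eq fun φ => ?_,
    fun η => hD.mul_eq_mul_of_dotProduct_mulVec_self_invariant (R_mul_transpose η) (hs η).2,
    fun η => mul_eq_mul_of_dotProduct_mulVec_invariant (R_mul_transpose η) (hE η),
    fun η => hF.mul_eq_mul_of_dotProduct_mulVec_self_invariant (R_mul_transpose η) (hr η).2⟩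
  · rw [← R_pi_mulVec, (hs Real.pi).1]
  · rw [← R_pi_mulVec, (hr Real.pi).1]
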